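/- Let μ > 0, κ > 0, γ̄ > 0, ϑ > 0. Then ∫₀^∞ (μ(1+κ)^{(μ+1)/2} / (κ^{(μ-1)/2} e^{μκ})) · (γ^{(μ-1)/2}/γ̄^{(μ+1)/2}) · e^{-μ(1+κ)γ/γ̄ - ϑγ} · I_{μ-1}(2μ√(κ(κ+1)γ/γ̄)) dγ = (1/(1 + ϑγ̄/(μ(1+κ)))^μ) · exp( μκ/(1 + ϑγ̄/(μ(1+κ))) - μκ ). -/

import Mathlib

open MeasureTheory Real

noncomputable def besselI (ν x : ℝ) : ℝ :=
  (x / 2) ^ ν * ∑' n : ℕ, (x ^ 2 / 4) ^ n / (n.factorial * Real.Gamma (ν + n + 1))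

theorem stmt_9 (μ κ γbar ϑ : ℝ) (hμ : 0 < μ) (hκ : 0 < κ) (hγ : 0 < γbar) (hϑ : 0 < ϑ) :
    ∫ γ in Set.Ioi (0 : ℝ),
        (μ * (1 + κ) ^ ((μ + 1) / 2) / (κ ^ ((μ - 1) / 2) * Real.exp (μ * κ))) *
          (γ ^ ((μ - 1) / 2) / γbar ^ ((μ + 1) / 2)) *
          Real.exp (-(μ * (1 + κ) * γ) / γbar - ϑ * γ) *
          besselI (μ - 1) (2 * μ * Real.sqrt (κ * (κ + 1) * γ / γbar))
      = (1 / (1 + ϑ * γbar / (μ * (1 + κ))) ^ μ) *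
          Real.exp (μ * κ / (1 + ϑ * γbar / (μ * (1 + κ))) - μ * κ) := by
  simp only [show (1:ℝ) + κ = κ + 1 from add_comm 1 κ]
  have hκ1 : (0:ℝ) < κ + 1 := by linarith
  set s : ℝ := μ * (κ + 1) / γbar + ϑ with hs_def
  have hs : 0 < s := by positivity
  set X : ℝ := μ ^ 2 * (κ * (κ + 1)) / γbar with hX_def
  have hX : 0 < X := by positivity
  set K : ℝ := μ ^ μ * (κ + 1) ^ μ / γbar ^ μ * Real.exp (-(μ * κ)) with hK_def
  have hK : 0 < K := by positivity
  have hΓ : ∀ n : ℕ, 0 < Real.Gamma (μ + n) := fun n => Real.Gamma_pos_of_pos (by positivity)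
  set f : ℕ → ℝ → ℝ := fun n γ =>
    K * (X ^ n / (n.factorial * Real.Gamma (μ + n))) *
      (γ ^ (μ + n - 1) * Real.exp (-(s * γ))) with hf_def
  -- pointwise equality of the integrand with the series
  have hpt : Set.EqOn
      (fun γ : ℝ => (μ * (κ + 1) ^ ((μ + 1) / 2) / (κ ^ ((μ - 1) / 2) * Real.exp (μ * κ))) *
          (γ ^ ((μ - 1) / 2) / γbar ^ ((μ + 1) / 2)) *
          Real.exp (-(μ * (κ + 1) * γ) / γbar - ϑ * γ) *
          besselI (μ - 1) (2 * μ * Real.sqrt (κ * (κ + 1) * γ / γbar)))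
      (fun γ => ∑' n, f n γ) (Set.Ioi 0) := by
    intro γ hγp
    have hγ0 : (0:ℝ) < γ := hγp
    have htt : (0:ℝ) < κ * (κ + 1) * γ / γbar := by positivity
    simp only [besselI]
    have hΓarg : ∀ n : ℕ, μ - 1 + (n:ℝ) + 1 = μ + n := fun n => by ring
    simp only [hΓarg]
    have hhalf : 2 * μ * Real.sqrt (κ * (κ + 1) * γ / γbar) / 2
        = μ * Real.sqrt (κ * (κ + 1) * γ / γbar) := by ring
    have hsq : (2 * μ * Real.sqrt (κ * (κ + 1) * γ / γbar)) ^ 2 / 4 = X * γ := by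
      rw [mul_pow, mul_pow, Real.sq_sqrt htt.le, hX_def]
      field_simp
      ring
    rw [hhalf, hsq]
    have core : ∀ n : ℕ,
        (μ * (κ + 1) ^ ((μ + 1) / 2) / (κ ^ ((μ - 1) / 2) * Real.exp (μ * κ))) *
          (γ ^ ((μ - 1) / 2) / γbar ^ ((μ + 1) / 2)) *
          Real.exp (-(μ * (κ + 1) * γ) / γbar - ϑ * γ) *
          (μ * Real.sqrt (κ * (κ + 1) * γ / γbar)) ^ (μ - 1) * (X * γ) ^ n
        = K * X ^ n * (γ ^ (μ + (n:ℝ) - 1) * Real.exp (-(s * γ))) := by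
      intro n
      have hL : (0:ℝ) < (μ * (κ + 1) ^ ((μ + 1) / 2) / (κ ^ ((μ - 1) / 2) * Real.exp (μ * κ))) *
          (γ ^ ((μ - 1) / 2) / γbar ^ ((μ + 1) / 2)) *
          Real.exp (-(μ * (κ + 1) * γ) / γbar - ϑ * γ) *
          (μ * Real.sqrt (κ * (κ + 1) * γ / γbar)) ^ (μ - 1) * (X * γ) ^ n := by positivity
      have hR : (0:ℝ) < K * X ^ n * (γ ^ (μ + (n:ℝ) - 1) * Real.exp (-(s * γ))) := by positivity
      apply Real.log_injOn_pos (Set.mem_Ioi.2 hL) (Set.mem_Ioi.2 hR)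
      rw [hK_def, hX_def, hs_def]
      have h8 : (0:ℝ) ≤ κ * (κ + 1) * γ / γbar := htt.le
      simp (disch := positivity) only [Real.log_mul, Real.log_div, Real.log_rpow,
        Real.log_pow, Real.log_exp, Real.log_sqrt h8]
      ring
    calc (μ * (κ + 1) ^ ((μ + 1) / 2) / (κ ^ ((μ - 1) / 2) * Real.exp (μ * κ))) *
          (γ ^ ((μ - 1) / 2) / γbar ^ ((μ + 1) / 2)) *
          Real.exp (-(μ * (κ + 1) * γ) / γbar - ϑ * γ) *
          ((μ * Real.sqrt (κ * (κ + 1) * γ / γbar)) ^ (μ - 1) *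
            ∑' n : ℕ, (X * γ) ^ n / (n.factorial * Real.Gamma (μ + n)))
        = ∑' n : ℕ, (μ * (κ + 1) ^ ((μ + 1) / 2) / (κ ^ ((μ - 1) / 2) * Real.exp (μ * κ))) *
          (γ ^ ((μ - 1) / 2) / γbar ^ ((μ + 1) / 2)) *
          Real.exp (-(μ * (κ + 1) * γ) / γbar - ϑ * γ) *
          (μ * Real.sqrt (κ * (κ + 1) * γ / γbar)) ^ (μ - 1) *
          ((X * γ) ^ n / (n.factorial * Real.Gamma (μ + n))) := by
          rw [← tsum_mul_left, ← tsum_mul_left]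
          exact tsum_congr fun n => by ring
      _ = ∑' n : ℕ, f n γ := by
          refine tsum_congr fun n => ?_
          rw [hf_def]
          simp only []
          rw [div_eq_mul_inv ((X*γ)^n), div_eq_mul_inv (X^n)]
          linear_combination (((n.factorial : ℝ) * Real.Gamma (μ + n))⁻¹) * core n
  rw [setIntegral_congr_fun measurableSet_Ioi hpt]
  -- integrability and value of each term
  have hfint : ∀ n : ℕ, IntegrableOn (f n) (Set.Ioi 0) := by
    intro n
    have hbase : IntegrableOn (fun γ : ℝ => γ ^ (μ + (n:ℝ) - 1) * Real.exp (-s * γ ^ (1:ℝ)))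
        (Set.Ioi 0) :=
      integrableOn_rpow_mul_exp_neg_mul_rpow (by push_cast; nlinarith [Nat.cast_nonneg (α := ℝ) n])
        one_pos hs
    have : IntegrableOn (fun γ : ℝ => γ ^ (μ + (n:ℝ) - 1) * Real.exp (-(s * γ))) (Set.Ioi 0) := by
      refine hbase.congr_fun (fun x hx => ?_) measurableSet_Ioi
      beta_reduce
      rw [Real.rpow_one, neg_mul]
    exact this.const_mul _
  have hmeas : ∀ n : ℕ, AEStronglyMeasurable (f n) (volume.restrict (Set.Ioi 0)) := fun n =>
    (hfint n).aestronglyMeasurable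
  have hfnn : ∀ n : ℕ, ∀ γ ∈ Set.Ioi (0:ℝ), 0 ≤ f n γ := by
    intro n γ hγ0
    have := hΓ n
    have : (0:ℝ) < γ := hγ0
    rw [hf_def]
    positivity
  have hint : ∀ n : ℕ, ∫ γ in Set.Ioi (0:ℝ), f n γ
      = (K * (1/s) ^ μ) * ((X/s) ^ n / n.factorial) := by
    intro n
    have h0 : ∫ γ in Set.Ioi (0:ℝ), f n γ
        = (K * (X ^ n / (n.factorial * Real.Gamma (μ + n)))) *
          ∫ γ in Set.Ioi (0:ℝ), γ ^ (μ + (n:ℝ) - 1) * Real.exp (-(s * γ)) := by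
      rw [← integral_const_mul]
    rw [h0, integral_rpow_mul_exp_neg_mul_Ioi (by positivity) hs,
      Real.rpow_add (by positivity : (0:ℝ) < 1/s), Real.rpow_natCast]
    have hΓn := (hΓ n).ne'
    have hfn : ((n.factorial : ℝ)) ≠ 0 := by positivity
    field_simp
    ring
  have hsum : Summable (fun n : ℕ => (K * (1/s) ^ μ) * ((X/s) ^ n / n.factorial)) :=
    (Real.summable_pow_div_factorial (X/s)).mul_left _
  have hterm_nn : ∀ n : ℕ, 0 ≤ (K * (1/s) ^ μ) * ((X/s) ^ n / n.factorial) := by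
    intro n; positivity
  rw [integral_tsum hmeas ?_]
  · have h1 : (∑' n : ℕ, ∫ γ in Set.Ioi (0:ℝ), f n γ)
        = (K * (1/s) ^ μ) * ∑' n : ℕ, ((X/s) ^ n / n.factorial) := by
      rw [← tsum_mul_left]; exact tsum_congr fun n => by rw [hint n]
    have h2 : (∑' n : ℕ, ((X/s) ^ n / (n.factorial : ℝ))) = Real.exp (X/s) := by
      rw [Real.exp_eq_exp_ℝ, NormedSpace.exp_eq_tsum_div]
    rw [h1, h2]
    -- final constant identity
    have hB : (0:ℝ) < 1 + ϑ * γbar / (μ * (κ + 1)) := by positivity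
    have hL : (0:ℝ) < K * (1/s) ^ μ * Real.exp (X/s) := by positivity
    have hR : (0:ℝ) < (1 / (1 + ϑ * γbar / (μ * (κ + 1))) ^ μ) *
        Real.exp (μ * κ / (1 + ϑ * γbar / (μ * (κ + 1))) - μ * κ) := by positivity
    apply Real.log_injOn_pos (Set.mem_Ioi.2 hL) (Set.mem_Ioi.2 hR)
    rw [hK_def, hX_def, hs_def]
    have hT : (0:ℝ) < μ * (κ + 1) + ϑ * γbar := by positivity
    rw [show μ * (κ + 1) / γbar + ϑ = (μ * (κ + 1) + ϑ * γbar) / γbar from by field_simp,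
      show 1 + ϑ * γbar / (μ * (κ + 1)) = (μ * (κ + 1) + ϑ * γbar) / (μ * (κ + 1)) from by
        field_simp]
    simp (disch := positivity) only [Real.log_mul, Real.log_div, Real.log_rpow,
      Real.log_pow, Real.log_exp, Real.log_one]
    have h1 : γbar ≠ 0 := hγ.ne'
    have h2 : μ * (κ + 1) + ϑ * γbar ≠ 0 := hT.ne'
    have h3 : μ + μ * κ ≠ 0 := by positivity
    have h4 : μ * κ + μ + ϑ * γbar ≠ 0 := by positivity
    field_simp
    ring
  · have h1 : ∀ n : ℕ, (∫⁻ γ, ‖f n γ‖ₑ ∂(volume.restrict (Set.Ioi 0)))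
        = ENNReal.ofReal ((K * (1/s) ^ μ) * ((X/s) ^ n / n.factorial)) := by
      intro n
      rw [← ofReal_integral_norm_eq_lintegral_enorm (hfint n), ← hint n]
      congr 1
      refine setIntegral_congr_fun measurableSet_Ioi fun γ hγ0 => ?_
      rw [Real.norm_eq_abs, abs_of_nonneg (hfnn n γ hγ0)]
    simp only [h1]
    rw [← ENNReal.ofReal_tsum_of_nonneg hterm_nn hsum]
    exact ENNReal.ofReal_ne_top
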